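/- arXiv:math/0104246 — 4 statements merged into one kernel-verified Lean document; each statement's English description precedes it below -/
import Mathlib

section
/- Let H be a Hilbert space, T : H → H a bounded linear operator, and M a closed subspace of H that is invariant under T (i.e. T(M) ⊆ M). Suppose the orthogonal complement of the closure of T(M) in M has dimension k < ∞. Then for every natural number l, the orthogonal complement of the closure of T^l(M) in M has dimension at most l·k. -/
/-!
Write `A l` for the closure of `T^l M`; these form a decreasing chain of closed subspaces starting
at `A 0 = M`, so `M ⊖ A l` is covered by the defect spaces `D i = A i ⊖ A (i + 1)`, `i < l`.
The dimensions of the defect spaces do not increase: the map `x ↦ P (T x)`, with `P` the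
orthogonal projection onto `(A (i + 2))ᗮ`, kills `A (i + 1)`, so it sends `A i` into the image of
the finite-dimensional, hence closed, space `D i`; since `T (A i)` is dense in `A (i + 1)` this
image contains `D (i + 1)`. Hence `dim (M ⊖ A l) ≤ l * dim (D 0) = l * k`.
-/

open Submodule

section PowMapClosure

variable {R E : Type*} [Semiring R] [TopologicalSpace E] [AddCommMonoid E] [Module R E]
  [ContinuousAdd E] (T : E →L[R] E) (M : Submodule R E)

theorem Submodule.map_pow_succ (l : ℕ) :
    M.map ((T ^ (l + 1) : E →L[R] E) : E →ₗ[R] E) =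
      (M.map ((T ^ l : E →L[R] E) : E →ₗ[R] E)).map (T : E →ₗ[R] E) := by
  rw [pow_succ', ContinuousLinearMap.toLinearMap_mul, Module.End.mul_eq_comp, map_comp]

variable [TopologicalSpace R] [ContinuousSMul R E]

noncomputable def powMapClosure (l : ℕ) : Submodule R E :=
  (M.map ((T ^ l : E →L[R] E) : E →ₗ[R] E)).topologicalClosure

theorem powMapClosure_zero (hM : IsClosed (M : Set E)) : powMapClosure T M 0 = M := by
  rw [powMapClosure, pow_zero, ContinuousLinearMap.toLinearMap_one, Module.End.one_eq_id, map_id,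
    hM.submodule_topologicalClosure_eq]

theorem powMapClosure_one : powMapClosure T M 1 = (M.map (T : E →ₗ[R] E)).topologicalClosure := by
  rw [powMapClosure, pow_one]

theorem powMapClosure_antitone (hMinv : ∀ x ∈ M, T x ∈ M) : Antitone (powMapClosure T M) := by
  refine antitone_nat_of_succ_le fun l ↦ topologicalClosure_mono ?_
  rw [pow_succ, ContinuousLinearMap.toLinearMap_mul, Module.End.mul_eq_comp, map_comp]
  exact map_mono (map_le_iff_le_comap.2 hMinv)

theorem powMapClosure_succ_le_closure_map (l : ℕ) :
    powMapClosure T M (l + 1) ≤ ((powMapClosure T M l).map (T : E →ₗ[R] E)).topologicalClosure :=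
  topologicalClosure_mono <| (map_pow_succ T M l).le.trans (map_mono (le_topologicalClosure _))

theorem map_powMapClosure_le (l : ℕ) :
    (powMapClosure T M l).map (T : E →ₗ[R] E) ≤ powMapClosure T M (l + 1) := by
  rw [powMapClosure, powMapClosure, map_pow_succ]
  exact topologicalClosure_map T _

end PowMapClosure

section Defect

variable {𝕜 E : Type*} [RCLike 𝕜] [NormedAddCommGroup E] [InnerProductSpace 𝕜 E]

theorem inf_orthogonal_le_sup_inf_orthogonal {M A B : Submodule 𝕜 E} [A.HasOrthogonalProjection]
    (hAM : A ≤ M) (hBA : B ≤ A) : M ⊓ Bᗮ ≤ (M ⊓ Aᗮ) ⊔ (A ⊓ Bᗮ) := by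
  calc M ⊓ Bᗮ = (Aᗮ ⊓ M ⊔ A) ⊓ Bᗮ := by
        rw [sup_comm, sup_orthogonal_inf_of_hasOrthogonalProjection hAM]
    _ ≤ Aᗮ ⊓ M ⊔ A ⊓ Bᗮ := sup_inf_le_assoc_of_le A (inf_le_left.trans (orthogonal_le hBA))
    _ = (M ⊓ Aᗮ) ⊔ (A ⊓ Bᗮ) := by rw [inf_comm]

theorem rank_inf_orthogonal_le_sum {A : ℕ → Submodule 𝕜 E} [∀ i, (A i).HasOrthogonalProjection]
    (hA : Antitone A) (l : ℕ) :
    Module.rank 𝕜 ↥(A 0 ⊓ (A l)ᗮ) ≤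
      ∑ i ∈ Finset.range l, Module.rank 𝕜 ↥(A i ⊓ (A (i + 1))ᗮ) := by
  induction l with
  | zero => simp [inf_orthogonal_eq_bot]
  | succ l ih =>
    calc Module.rank 𝕜 ↥(A 0 ⊓ (A (l + 1))ᗮ)
        ≤ Module.rank 𝕜 ↥((A 0 ⊓ (A l)ᗮ) ⊔ (A l ⊓ (A (l + 1))ᗮ)) :=
          rank_mono (inf_orthogonal_le_sup_inf_orthogonal (hA l.zero_le) (hA l.le_succ))
      _ ≤ Module.rank 𝕜 ↥(A 0 ⊓ (A l)ᗮ) + Module.rank 𝕜 ↥(A l ⊓ (A (l + 1))ᗮ) :=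
          rank_add_le_rank_add_rank _ _
      _ ≤ _ := by
          rw [Finset.sum_range_succ]
          gcongr

theorem rank_inf_orthogonal_le_of_map_le [CompleteSpace E] (T : E →L[𝕜] E)
    {A B A' B' : Submodule 𝕜 E} [B.HasOrthogonalProjection] [FiniteDimensional 𝕜 ↥(A ⊓ Bᗮ)]
    (hBA : B ≤ A) (hTB : B.map (T : E →ₗ[𝕜] E) ≤ B')
    (hA' : A' ≤ (A.map (T : E →ₗ[𝕜] E)).topologicalClosure) :
    Module.rank 𝕜 ↥(A' ⊓ B'ᗮ) ≤ Module.rank 𝕜 ↥(A ⊓ Bᗮ) := by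
  set P := B'ᗮ.starProjection
  set S := (A ⊓ Bᗮ).map ((P ∘L T : E →L[𝕜] E) : E →ₗ[𝕜] E)
  have hS : IsClosed (S : Set E) := S.closed_of_finiteDimensional
  have hPT : ∀ a ∈ A, P (T a) ∈ S := by
    intro a ha
    rw [← sup_orthogonal_inf_of_hasOrthogonalProjection hBA, mem_sup] at ha
    obtain ⟨b, hb, c, hc, rfl⟩ := ha
    have hPb : P (T b) = 0 := starProjection_orthogonal_apply_eq_zero (hTB ⟨b, hb, rfl⟩)
    rw [map_add, map_add, hPb, zero_add]
    exact ⟨c, ⟨hc.2, hc.1⟩, rfl⟩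
  have hD : A' ⊓ B'ᗮ ≤ S := by
    rintro d ⟨hdA', hdB'⟩
    have hPd : P d ∈ closure (S : Set E) := by
      refine map_mem_closure P.continuous (hA' hdA') ?_
      rintro _ ⟨a, ha, rfl⟩
      exact hPT a ha
    rwa [hS.closure_eq, starProjection_eq_self_iff.2 hdB'] at hPd
  exact (rank_mono hD).trans (rank_map_le _ _)

end Defect

instance powMapClosure.hasOrthogonalProjection {𝕜 E : Type*} [RCLike 𝕜] [NormedAddCommGroup E]
    [InnerProductSpace 𝕜 E] [CompleteSpace E] (T : E →L[𝕜] E) (M : Submodule 𝕜 E) (l : ℕ) :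
    (powMapClosure T M l).HasOrthogonalProjection := by
  have : CompleteSpace ↥(powMapClosure T M l) := (isClosed_topologicalClosure _).completeSpace_coe
  infer_instance

/-- If `T` is a bounded operator on a complex Hilbert space `H` and `M` is a
closed `T`-invariant subspace with `dim (M ⊖ cl(T M)) = k < ∞`, then for every `l`,
`dim (M ⊖ cl(T^l M)) ≤ l * k`. -/
theorem stmt0
    {H : Type*} [NormedAddCommGroup H] [InnerProductSpace ℂ H] [CompleteSpace H]
    (T : H →L[ℂ] H) (M : Submodule ℂ H) (hMc : IsClosed (M : Set H))
    (hMinv : ∀ x ∈ M, T x ∈ M) (k : ℕ)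
    (hk : Module.rank ℂ ↥(M ⊓ ((M.map (T : H →ₗ[ℂ] H)).topologicalClosure)ᗮ) = k) :
    ∀ l : ℕ,
      Module.rank ℂ ↥(M ⊓ ((M.map ((T ^ l : H →L[ℂ] H) : H →ₗ[ℂ] H)).topologicalClosure)ᗮ)
        ≤ (l * k : ℕ) := by
  set A := powMapClosure T M
  have hA0 : A 0 = M := powMapClosure_zero T M hMc
  have hdefect : ∀ i, Module.rank ℂ ↥(A i ⊓ (A (i + 1))ᗮ) ≤ k := by
    intro i
    induction i with
    | zero => rw [hA0, zero_add, show A 1 = _ from powMapClosure_one T M, hk]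
    | succ i ih =>
      have : FiniteDimensional ℂ ↥(A i ⊓ (A (i + 1))ᗮ) :=
        Module.rank_lt_aleph0_iff.1 (ih.trans_lt Cardinal.natCast_lt_aleph0)
      exact (rank_inf_orthogonal_le_of_map_le T (powMapClosure_antitone T M hMinv i.le_succ)
        (map_powMapClosure_le T M _) (powMapClosure_succ_le_closure_map T M i)).trans ih
  intro l
  calc Module.rank ℂ ↥(M ⊓ (A l)ᗮ)
      ≤ ∑ i ∈ Finset.range l, Module.rank ℂ ↥(A i ⊓ (A (i + 1))ᗮ) :=
        hA0 ▸ rank_inf_orthogonal_le_sum (powMapClosure_antitone T M hMinv) l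
    _ ≤ ∑ _i ∈ Finset.range l, (k : Cardinal) := Finset.sum_le_sum fun i _ ↦ hdefect i
    _ = (l * k : ℕ) := by simp
end

section
/- Let H be a Hilbert space, T a bounded injective operator on H, and M a closed T-invariant subspace. For each t ≥ 1, the map B_t : cl(T^{t-1}M) ⊖ cl(T^t M) → M ⊖ cl(TM) defined on elements of the form T^{t-1}x (with x ∈ M) by B_t(T^{t-1}x) = P_{M ⊖ cl(TM)}(x) is injective; in particular dim(cl(T^{t-1}M) ⊖ cl(T^t M)) ≤ dim(M ⊖ cl(TM)). -/
/-!
Put `N = cl(T M) ≤ M` and `W = M ⊖ N`, so that `M = N ⊕ W`. If `x, y ∈ M` have the same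
projection onto `W`, then `x - y ∈ N`, hence `T^(t-1) (x - y)` lies in `cl(T^t M)`; being also
orthogonal to `cl(T^t M)`, it vanishes. For the dimension bound, a vector of
`A = cl(T^(t-1) M) ⊖ cl(T^t M)` orthogonal to `T^(t-1) W` is orthogonal to
`T^(t-1) M ⊆ T^(t-1) W + cl(T^t M)`, hence zero as it lies in `cl(T^(t-1) M)`; so the compression
`P_A T^(t-1) : W → A` has injective adjoint.
-/

open Submodule
open scoped InnerProduct

universe u

theorem Submodule.rank_le_of_inf_orthogonal_map_eq_bot {𝕜 : Type*} [RCLike 𝕜] {E F : Type u}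
    [NormedAddCommGroup E] [InnerProductSpace 𝕜 E] [NormedAddCommGroup F] [InnerProductSpace 𝕜 F]
    (S : E →L[𝕜] F)
    (W : Submodule 𝕜 E) (A : Submodule 𝕜 F) [CompleteSpace W] [CompleteSpace A]
    (h : A ⊓ (W.map (S : E →ₗ[𝕜] F))ᗮ = ⊥) :
    Module.rank 𝕜 A ≤ Module.rank 𝕜 W := by
  let C : W →L[𝕜] A := A.orthogonalProjectionOnto ∘L S ∘L W.subtypeL
  refine LinearMap.rank_le_of_injective (C† : A →ₗ[𝕜] W) ?_
  rw [← LinearMap.ker_eq_bot, Submodule.eq_bot_iff]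
  intro a (ha : (C†) a = 0)
  have ha' : (a : F) ∈ (W.map (S : E →ₗ[𝕜] F))ᗮ := by
    rintro _ ⟨w, hw, rfl⟩
    simpa [C, ha] using (C.adjoint_inner_right ⟨w, hw⟩ a).symm
  have : (a : F) ∈ A ⊓ (W.map (S : E →ₗ[𝕜] F))ᗮ := ⟨a.2, ha'⟩
  rw [h] at this
  exact Subtype.ext ((mem_bot 𝕜).1 this)

section

variable {𝕜 E F : Type*} [RCLike 𝕜] [NormedAddCommGroup E] [InnerProductSpace 𝕜 E]
  [NormedAddCommGroup F] [InnerProductSpace 𝕜 F] {K M : Submodule 𝕜 E}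

theorem Submodule.inf_orthogonal_inf_inf_orthogonal_le [K.HasOrthogonalProjection] (hKM : K ≤ M) :
    M ⊓ (M ⊓ Kᗮ)ᗮ ≤ K := by
  intro x hx
  obtain ⟨hxM, hxW⟩ := mem_inf.1 hx
  rw [← sup_orthogonal_inf_of_hasOrthogonalProjection hKM, mem_sup] at hxM
  obtain ⟨k, hk, w, hw, rfl⟩ := hxM
  have hKW : K ≤ (M ⊓ Kᗮ)ᗮ :=
    (le_orthogonal_orthogonal K).trans (orthogonal_le inf_le_right)
  have hw' : w ∈ (M ⊓ Kᗮ)ᗮ := by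
    simpa using sub_mem hxW (hKW hk)
  have hw0 : w = 0 := by
    rw [← mem_bot 𝕜, ← inf_orthogonal_eq_bot (M ⊓ Kᗮ)]
    exact ⟨⟨hw.2, hw.1⟩, hw'⟩
  simpa [hw0] using hk

theorem Submodule.map_topologicalClosure_map_le {G : Type*} [NormedAddCommGroup G]
    [InnerProductSpace 𝕜 G] (S : F →L[𝕜] G) (T : E →L[𝕜] F) (p : Submodule 𝕜 E) :
    (p.map (T : E →ₗ[𝕜] F)).topologicalClosure.map (S : F →ₗ[𝕜] G) ≤
      (p.map ((S ∘L T : E →L[𝕜] G) : E →ₗ[𝕜] G)).topologicalClosure := by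
  refine (topologicalClosure_map S _).trans (topologicalClosure_mono ?_)
  rw [← map_comp]
  rfl

variable (S : E →L[𝕜] F)

theorem Submodule.map_eq_of_orthogonalProjectionOnto_inf_orthogonal_eq
    [K.HasOrthogonalProjection] [(M ⊓ Kᗮ).HasOrthogonalProjection] (hKM : K ≤ M)
    {N' : Submodule 𝕜 F} (hSK : K.map (S : E →ₗ[𝕜] F) ≤ N') {x y : E} (hx : x ∈ M) (hy : y ∈ M)
    (hSx : S x ∈ N'ᗮ) (hSy : S y ∈ N'ᗮ)
    (hxy : (M ⊓ Kᗮ).orthogonalProjectionOnto x = (M ⊓ Kᗮ).orthogonalProjectionOnto y) :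
    S x = S y := by
  have hxyK : x - y ∈ K := by
    refine inf_orthogonal_inf_inf_orthogonal_le hKM ⟨sub_mem hx hy, ?_⟩
    rw [SetLike.mem_coe, ← orthogonalProjectionOnto_eq_zero_iff, map_sub, hxy, sub_self]
  have hS : S (x - y) ∈ N' ⊓ N'ᗮ := by
    refine ⟨hSK ⟨x - y, hxyK, rfl⟩, ?_⟩
    rw [map_sub]
    exact sub_mem hSx hSy
  rwa [inf_orthogonal_eq_bot, mem_bot, map_sub, sub_eq_zero] at hS

theorem Submodule.topologicalClosure_map_inf_orthogonal_inf_orthogonal_map_eq_bot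
    [K.HasOrthogonalProjection] (hKM : K ≤ M) {N' : Submodule 𝕜 F}
    (hSK : K.map (S : E →ₗ[𝕜] F) ≤ N') :
    (M.map (S : E →ₗ[𝕜] F)).topologicalClosure ⊓ N'ᗮ ⊓ ((M ⊓ Kᗮ).map (S : E →ₗ[𝕜] F))ᗮ = ⊥ := by
  have hMS : M.map (S : E →ₗ[𝕜] F) ≤ N' ⊔ (M ⊓ Kᗮ).map (S : E →ₗ[𝕜] F) := by
    conv_lhs => rw [← sup_orthogonal_inf_of_hasOrthogonalProjection hKM, inf_comm]
    rw [Submodule.map_sup]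
    exact sup_le_sup_right hSK _
  refine eq_bot_iff.2 ?_
  calc _ ≤ (M.map (S : E →ₗ[𝕜] F)).topologicalClosure ⊓ (M.map (S : E →ₗ[𝕜] F))ᗮ := by
        rw [inf_assoc, inf_orthogonal]
        exact inf_le_inf_left _ (orthogonal_le hMS)
    _ = ⊥ := by rw [← orthogonal_closure, inf_orthogonal_eq_bot]

end

theorem stmt1_general
    {H : Type*} [NormedAddCommGroup H] [InnerProductSpace ℂ H] [CompleteSpace H]
    (T : H →L[ℂ] H)
    (M : Submodule ℂ H) (hMc : IsClosed (M : Set H))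
    (hMinv : ∀ x ∈ M, T x ∈ M) (t : ℕ) (ht : 1 ≤ t) :
    letI W : Submodule ℂ H := M ⊓ ((M.map (T : H →ₗ[ℂ] H)).topologicalClosure)ᗮ
    letI A : Submodule ℂ H :=
      (M.map ((T ^ (t - 1) : H →L[ℂ] H) : H →ₗ[ℂ] H)).topologicalClosure ⊓
        ((M.map ((T ^ t : H →L[ℂ] H) : H →ₗ[ℂ] H)).topologicalClosure)ᗮ
    letI : CompleteSpace W :=
      (hMc.inter (Submodule.isClosed_orthogonal _)).completeSpace_coe
    (∀ x ∈ M, ∀ y ∈ M, (T ^ (t - 1)) x ∈ A → (T ^ (t - 1)) y ∈ A →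
        Submodule.orthogonalProjectionOnto W x = Submodule.orthogonalProjectionOnto W y → (T ^ (t - 1)) x = (T ^ (t - 1)) y)
      ∧ Module.rank ℂ ↥A ≤ Module.rank ℂ ↥W := by
  set S : H →L[ℂ] H := T ^ (t - 1)
  set N := (M.map (T : H →ₗ[ℂ] H)).topologicalClosure
  set N' := (M.map ((T ^ t : H →L[ℂ] H) : H →ₗ[ℂ] H)).topologicalClosure
  set W := M ⊓ Nᗮ
  set A := (M.map (S : H →ₗ[ℂ] H)).topologicalClosure ⊓ N'ᗮ
  have : CompleteSpace W := (hMc.inter (isClosed_orthogonal _)).completeSpace_coe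
  have : CompleteSpace A :=
    ((isClosed_topologicalClosure _).inter (isClosed_orthogonal _)).completeSpace_coe
  have hNM : N ≤ M := topologicalClosure_minimal _ (map_le_iff_le_comap.2 hMinv) hMc
  have hSN : N.map (S : H →ₗ[ℂ] H) ≤ N' := by
    have hST : S ∘L T = T ^ t := by
      rw [← ContinuousLinearMap.mul_def, ← pow_succ, Nat.sub_add_cancel ht]
    simpa only [N', ← hST] using map_topologicalClosure_map_le S T M
  exact ⟨fun x hx y hy hxA hyA ↦
      map_eq_of_orthogonalProjectionOnto_inf_orthogonal_eq S hNM hSN hx hy hxA.2 hyA.2,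
    rank_le_of_inf_orthogonal_map_eq_bot S W A
      (topologicalClosure_map_inf_orthogonal_inf_orthogonal_map_eq_bot S hNM hSN)⟩

/-- For an injective bounded operator `T` on a Hilbert space and a closed
`T`-invariant subspace `M`, the map `B_t` sending `T^(t-1) x` (for `x ∈ M`,
`T^(t-1) x ∈ cl(T^(t-1) M) ⊖ cl(T^t M)`) to `P_{M ⊖ cl(TM)} x` is injective; in
particular `dim (cl(T^(t-1) M) ⊖ cl(T^t M)) ≤ dim (M ⊖ cl(TM))`. -/
theorem stmt1
    {H : Type*} [NormedAddCommGroup H] [InnerProductSpace ℂ H] [CompleteSpace H]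
    (T : H →L[ℂ] H) (hT : Function.Injective T)
    (M : Submodule ℂ H) (hMc : IsClosed (M : Set H))
    (hMinv : ∀ x ∈ M, T x ∈ M) (t : ℕ) (ht : 1 ≤ t) :
    letI W : Submodule ℂ H := M ⊓ ((M.map (T : H →ₗ[ℂ] H)).topologicalClosure)ᗮ
    letI A : Submodule ℂ H :=
      (M.map ((T ^ (t - 1) : H →L[ℂ] H) : H →ₗ[ℂ] H)).topologicalClosure ⊓
        ((M.map ((T ^ t : H →L[ℂ] H) : H →ₗ[ℂ] H)).topologicalClosure)ᗮ
    letI : CompleteSpace W :=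
      (hMc.inter (Submodule.isClosed_orthogonal _)).completeSpace_coe
    (∀ x ∈ M, ∀ y ∈ M, (T ^ (t - 1)) x ∈ A → (T ^ (t - 1)) y ∈ A →
        Submodule.orthogonalProjectionOnto W x = Submodule.orthogonalProjectionOnto W y → (T ^ (t - 1)) x = (T ^ (t - 1)) y)
      ∧ Module.rank ℂ ↥A ≤ Module.rank ℂ ↥W :=
  stmt1_general T M hMc hMinv t ht
end

section
/- Let M be a closed submodule of the Drury–Arveson space H²_d (invariant under each coordinate multiplier), and for each j let H_{z_j} ⊂ H²_d denote the subspace of functions depending only on the variable z_j (the one-variable Hardy-type slice). If for each j the intersection M ∩ H_{z_j} contains a nonzero polynomial p_j(z_j) of degree at most A, then M has finite codimension in H²_d; indeed the quotient H²_d/M is spanned by the images of the monomials z^I with all components i_r < A. -/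
open scoped ComplexConjugate

/-- The Drury–Arveson space `H²_d` on the unit ball of `ℂ^d`, presented as a reproducing
kernel Hilbert space with kernel `K(z,w) = (1 - ⟨z,w⟩)⁻¹`. -/
structure DruryArveson (d : ℕ) (H : Type)
    [NormedAddCommGroup H] [InnerProductSpace ℂ H] [CompleteSpace H] where
  ev : H →ₗ[ℂ] ((EuclideanSpace ℂ (Fin d)) → ℂ)
  ker : EuclideanSpace ℂ (Fin d) → H
  sep : ∀ f : H, (∀ z, ‖z‖ < 1 → ev f z = 0) → f = 0
  repro : ∀ w, ‖w‖ < 1 → ∀ f : H, ev f w = inner ℂ (ker w) f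
  kernel : ∀ z w : EuclideanSpace ℂ (Fin d), ‖z‖ < 1 → ‖w‖ < 1 →
    ev (ker w) z = (1 - ∑ j, z j * conj (w j))⁻¹

/-!
Through the monomials `mon I`, the polynomials `q` with `q(z) ∈ M` form a subspace of
`ℂ[X₁, …, X_d]` stable under multiplication by the variables and containing a nonzero `p_j(X_j)` of
degree `≤ A` for each `j`. Reducing `X_j ^ deg p_j` modulo `p_j(X_j)` shows that the monomials with
all exponents `< A` span every polynomial modulo that subspace, so every `z^I` lies in
`span {z^I : I < A} ⊔ M`, which is closed, being a closed plus a finite-dimensional subspace.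

The monomials are dense: for small `w` the kernel `k_w` is the Neumann series
`∑ₙ Tⁿ 1` with `T = ∑ⱼ conj(w_j) M_{z_j}`, so a vector orthogonal to all monomials has
`ev g` vanishing near `0`. Along each complex line `ev g` is holomorphic, being a locally
uniform limit of combinations of kernels, so it vanishes on the whole ball.
-/

namespace MvPolynomial

open Finsupp (single)
open Submodule

section CommSemiring

variable {σ R : Type*} [CommSemiring R]

theorem mul_mem_of_forall_X_mul_mem {N : Submodule R (MvPolynomial σ R)}
    (hN : ∀ j, ∀ q ∈ N, X j * q ∈ N) (p : MvPolynomial σ R) {q : MvPolynomial σ R}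
    (hq : q ∈ N) : p * q ∈ N := by
  induction p using MvPolynomial.induction_on generalizing q with
  | C a => simpa [C_mul'] using N.smul_mem a hq
  | add p₁ p₂ h₁ h₂ => rw [add_mul]; exact N.add_mem (h₁ hq) (h₂ hq)
  | mul_X p j h => rw [mul_assoc]; exact h (hN j q hq)

theorem monomial_mul_aeval_X (n : σ →₀ ℕ) (j : σ) (p : Polynomial R) :
    monomial n 1 * Polynomial.aeval (X j) p =
      ∑ k ∈ Finset.range (p.natDegree + 1), p.coeff k • monomial (n + single j k) (1 : R) := by
  simp only [Polynomial.aeval_eq_sum_range, Finset.mul_sum, mul_smul_comm, X_pow_eq_monomial,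
    monomial_mul, one_mul]

end CommSemiring

variable {σ K : Type*} [Field K] {N : Submodule K (MvPolynomial σ K)}

theorem monomial_add_single_natDegree_mem_span_sup (hN : ∀ j, ∀ q ∈ N, X j * q ∈ N) {j : σ}
    {p : Polynomial K} (hp : p ≠ 0) (hpN : Polynomial.aeval (X j) p ∈ N) (n : σ →₀ ℕ) :
    monomial (n + single j p.natDegree) (1 : K) ∈
      span K ((fun k => monomial (n + single j k) (1 : K)) '' Set.Iio p.natDegree) ⊔ N := by
  set m := p.natDegree
  set V := span K ((fun k => monomial (n + single j k) (1 : K)) '' Set.Iio m)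
  have hlower : ∑ k ∈ Finset.range m, p.coeff k • monomial (n + single j k) (1 : K) ∈ V :=
    sum_mem fun k hk => smul_mem _ _ (subset_span ⟨k, Finset.mem_range.1 hk, rfl⟩)
  have hlead : p.leadingCoeff • monomial (n + single j m) (1 : K) ∈ V ⊔ N := by
    have h := monomial_mul_aeval_X n j p
    rw [Finset.sum_range_succ] at h
    rw [Polynomial.leadingCoeff, eq_sub_of_add_eq' h.symm]
    exact sub_mem (mem_sup_right (mul_mem_of_forall_X_mul_mem hN _ hpN)) (mem_sup_left hlower)
  simpa [smul_smul, inv_mul_cancel₀ (Polynomial.leadingCoeff_ne_zero.2 hp)] using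
    (V ⊔ N).smul_mem p.leadingCoeff⁻¹ hlead

theorem monomial_mem_restrictSupport_sup_of_le (hN : ∀ j, ∀ q ∈ N, X j * q ∈ N) {A : ℕ}
    (hA : ∀ j, ∃ p : Polynomial K, p ≠ 0 ∧ p.natDegree ≤ A ∧ Polynomial.aeval (X j) p ∈ N)
    {n : σ →₀ ℕ} {j : σ} (hn : ∀ r, r ≠ j → n r < A) (hnj : n j ≤ A) :
    monomial n (1 : K) ∈ restrictSupport K {n | ∀ r, n r < A} ⊔ N := by
  classical
  rcases hnj.lt_or_eq with hlt | heq
  · refine mem_sup_left ((monomial_mem_restrictSupport K).2 (Or.inl fun r => ?_))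
    by_cases hr : r = j
    · exact hr ▸ hlt
    · exact hn r hr
  obtain ⟨p, hp, hpA, hpN⟩ := hA j
  set m := p.natDegree
  have hsplit : n - single j m + single j m = n :=
    tsub_add_cancel_of_le (Finsupp.single_le_iff.2 (heq ▸ hpA))
  have hlow : span K ((fun k => monomial (n - single j m + single j k) (1 : K)) '' Set.Iio m) ≤
      restrictSupport K {n | ∀ r, n r < A} := by
    rw [span_le]
    rintro _ ⟨k, hk, rfl⟩
    refine (monomial_mem_restrictSupport K).2 (Or.inl fun r => ?_)
    have hk : k < m := hk
    have hnr := hn r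
    simp only [Finsupp.add_apply, Finsupp.tsub_apply, Finsupp.single_apply]
    split_ifs with hjr
    · subst hjr; omega
    · simpa using hnr (Ne.symm hjr)
  have := monomial_add_single_natDegree_mem_span_sup hN hp hpN (n - single j m)
  rw [hsplit] at this
  exact sup_le_sup_right hlow N this

theorem restrictSupport_sup_eq_top (hN : ∀ j, ∀ q ∈ N, X j * q ∈ N) {A : ℕ}
    (hA : ∀ j, ∃ p : Polynomial K, p ≠ 0 ∧ p.natDegree ≤ A ∧ Polynomial.aeval (X j) p ∈ N) :
    restrictSupport K {n | ∀ r, n r < A} ⊔ N = ⊤ := by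
  set B := restrictSupport K {n | ∀ r, n r < A} ⊔ N
  have hX : ∀ j, ∀ q ∈ B, X j * q ∈ B := by
    intro j q hq
    obtain ⟨s, hs, t, ht, rfl⟩ := mem_sup.1 hq
    clear hq
    rw [mul_add]
    refine add_mem ?_ (mem_sup_right (hN j t ht))
    rw [restrictSupport_eq_span] at hs
    induction hs using span_induction with
    | mem s hs =>
      obtain ⟨n, hn, rfl⟩ := hs
      rw [X, monomial_mul, one_mul, add_comm]
      refine monomial_mem_restrictSupport_sup_of_le hN hA (j := j) (fun r hr => ?_) ?_
      · simpa [Finsupp.single_apply, Ne.symm hr] using hn r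
      · simpa using hn j
    | zero => simp
    | add s₁ s₂ _ _ h₁ h₂ => rw [mul_add]; exact add_mem h₁ h₂
    | smul c s _ h => rw [mul_smul_comm]; exact smul_mem _ c h
  -- `1` has all exponents `< A` unless `A = 0`, and then some `p_j` is a nonzero constant in `N`.
  have h1 : (1 : MvPolynomial σ K) ∈ B := by
    by_cases hpos : ∀ r : σ, 0 < A
    · exact mem_sup_left ((monomial_mem_restrictSupport K (m := 0)).2 (Or.inl hpos))
    push Not at hpos
    obtain ⟨j, hA0⟩ := hpos
    obtain ⟨p, hp, hpA, hpN⟩ := hA j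
    have := monomial_add_single_natDegree_mem_span_sup hN hp hpN 0
    rw [Nat.eq_zero_of_le_zero (hpA.trans hA0)] at this
    exact mem_sup_right (by simpa using this)
  exact eq_top_iff.2 fun q _ => by simpa using mul_mem_of_forall_X_mul_mem hX q h1

end MvPolynomial

open Filter Topology Set Submodule

theorem EuclideanSpace.inner_eq_sum_mul_conj {ι : Type*} [Fintype ι] (v z : EuclideanSpace ℂ ι) :
    inner ℂ v z = ∑ j, z j * conj (v j) := by
  simp [PiLp.inner_apply]

theorem one_sub_inner_ne_zero {E : Type*} [NormedAddCommGroup E] [InnerProductSpace ℂ E]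
    {v z : E} (hv : ‖v‖ < 1) (hz : ‖z‖ < 1) : 1 - inner ℂ v z ≠ 0 := by
  refine sub_ne_zero.2 fun h => ?_
  have := (norm_inner_le_norm (𝕜 := ℂ) v z).trans_lt
    (mul_lt_one_of_nonneg_of_lt_one_left (norm_nonneg _) hv hz.le)
  rw [← h, norm_one] at this
  exact lt_irrefl _ this

theorem norm_sum_conj_smul_le {ι F : Type*} [Fintype ι] [SeminormedAddCommGroup F]
    [NormedSpace ℂ F] (w : EuclideanSpace ℂ ι) (T : ι → F) :
    ‖∑ j, conj (w j) • T j‖ ≤ ‖w‖ * ∑ j, ‖T j‖ := by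
  refine (norm_sum_le _ _).trans ?_
  rw [Finset.mul_sum]
  refine Finset.sum_le_sum fun j _ => ?_
  rw [norm_smul, RCLike.norm_conj]
  gcongr
  exact PiLp.norm_apply_le w j

namespace DruryArveson

section polynomialMap

variable {d : ℕ} {E : Type*} [AddCommGroup E] [Module ℂ E]

noncomputable def polynomialMap (mon : (Fin d →₀ ℕ) → E) : MvPolynomial (Fin d) ℂ →ₗ[ℂ] E :=
  (MvPolynomial.basisMonomials (Fin d) ℂ).constr ℂ mon

theorem polynomialMap_monomial (mon : (Fin d →₀ ℕ) → E) (I : Fin d →₀ ℕ) :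
    polynomialMap mon (MvPolynomial.monomial I 1) = mon I := by
  unfold polynomialMap
  simpa using (MvPolynomial.basisMonomials (Fin d) ℂ).constr_basis ℂ mon I

theorem range_polynomialMap (mon : (Fin d →₀ ℕ) → E) :
    LinearMap.range (polynomialMap mon) = span ℂ (range mon) :=
  Module.Basis.constr_range _ _

theorem map_polynomialMap_restrictSupport (mon : (Fin d →₀ ℕ) → E) (s : Set (Fin d →₀ ℕ)) :
    (MvPolynomial.restrictSupport ℂ s).map (polynomialMap mon) = span ℂ (mon '' s) := by
  rw [MvPolynomial.restrictSupport_eq_span, map_span, image_image]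
  simp only [polynomialMap_monomial]

end polynomialMap

variable {d : ℕ} {H : Type} [NormedAddCommGroup H] [InnerProductSpace ℂ H] [CompleteSpace H]
  (DA : DruryArveson d H)

theorem eq_of_ev_eq {f g : H} (h : ∀ z, ‖z‖ < 1 → DA.ev f z = DA.ev g z) : f = g :=
  sub_eq_zero.1 <| DA.sep _ fun z hz => by simp [h z hz]

theorem ev_ker_eq_inv (z w : EuclideanSpace ℂ (Fin d)) (hz : ‖z‖ < 1) (hw : ‖w‖ < 1) :
    DA.ev (DA.ker w) z = (1 - inner ℂ w z)⁻¹ := by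
  rw [DA.kernel z w hz hw, EuclideanSpace.inner_eq_sum_mul_conj]

theorem norm_ker_sq {v : EuclideanSpace ℂ (Fin d)} (hv : ‖v‖ < 1) :
    ‖DA.ker v‖ ^ 2 = (1 - ‖v‖ ^ 2)⁻¹ := by
  have h := DA.ev_ker_eq_inv v v hv hv
  rw [DA.repro v hv, inner_self_eq_norm_sq_to_K, inner_self_eq_norm_sq_to_K] at h
  exact Complex.ofReal_injective (by push_cast; exact h)

theorem norm_ker_le {v : EuclideanSpace ℂ (Fin d)} {ρ : ℝ} (hv : ‖v‖ ≤ ρ) (hρ : ρ < 1) :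
    ‖DA.ker v‖ ≤ √((1 - ρ ^ 2)⁻¹) := by
  have hρ0 : 0 ≤ ρ := (norm_nonneg v).trans hv
  refine Real.le_sqrt_of_sq_le ?_
  rw [DA.norm_ker_sq (hv.trans_lt hρ)]
  exact inv_anti₀ (by nlinarith) (by nlinarith [norm_nonneg v])

theorem norm_ev_le (f : H) {z : EuclideanSpace ℂ (Fin d)} (hz : ‖z‖ < 1) :
    ‖DA.ev f z‖ ≤ ‖DA.ker z‖ * ‖f‖ := by
  rw [DA.repro z hz]
  exact norm_inner_le_norm _ _

theorem topologicalClosure_span_ker_eq_top :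
    (span ℂ (DA.ker '' Metric.ball 0 1)).topologicalClosure = ⊤ := by
  rw [topologicalClosure_eq_top_iff, eq_bot_iff]
  intro g hg
  refine DA.sep g fun z hz => ?_
  rw [DA.repro z hz]
  exact (mem_orthogonal _ g).1 hg _ (subset_span ⟨z, by simpa using hz, rfl⟩)

def lineDomain (w : EuclideanSpace ℂ (Fin d)) : Set ℂ := (· • w) ⁻¹' Metric.ball 0 1

theorem isOpen_lineDomain (w : EuclideanSpace ℂ (Fin d)) : IsOpen (lineDomain w) :=
  Metric.isOpen_ball.preimage (by fun_prop)

theorem isPreconnected_lineDomain (w : EuclideanSpace ℂ (Fin d)) :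
    IsPreconnected (lineDomain w) :=
  ((convex_ball 0 1).linear_preimage
    ((LinearMap.toSpanSingleton ℂ _ w).restrictScalars ℝ)).isPreconnected

theorem differentiableOn_ev_ker_smul {v : EuclideanSpace ℂ (Fin d)} (hv : ‖v‖ < 1)
    (w : EuclideanSpace ℂ (Fin d)) :
    DifferentiableOn ℂ (fun c : ℂ => DA.ev (DA.ker v) (c • w)) (lineDomain w) := by
  have hEq : EqOn (fun c : ℂ => DA.ev (DA.ker v) (c • w)) (fun c => (1 - c * inner ℂ v w)⁻¹)
      (lineDomain w) := fun c hc => by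
    dsimp only
    rw [DA.ev_ker_eq_inv _ _ (by simpa [lineDomain] using hc) hv, inner_smul_right]
  refine (DifferentiableOn.inv (by fun_prop) fun c hc => ?_).congr hEq
  rw [← inner_smul_right]
  exact one_sub_inner_ne_zero hv (by simpa [lineDomain] using hc)

theorem differentiableOn_ev_smul_of_mem_span {x : H}
    (hx : x ∈ span ℂ (DA.ker '' Metric.ball 0 1)) (w : EuclideanSpace ℂ (Fin d)) :
    DifferentiableOn ℂ (fun c : ℂ => DA.ev x (c • w)) (lineDomain w) := by
  induction hx using span_induction with
  | mem x hx =>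
    obtain ⟨v, hv, rfl⟩ := hx
    exact DA.differentiableOn_ev_ker_smul (by simpa using hv) w
  | zero => simp only [map_zero, Pi.zero_apply]; exact differentiableOn_const 0
  | add x y _ _ hx hy => simp only [map_add, Pi.add_apply]; exact hx.add hy
  | smul a x _ hx => simp only [map_smul, Pi.smul_apply, smul_eq_mul]; exact hx.const_mul a

theorem tendstoLocallyUniformlyOn_ev_smul (g : H) (w : EuclideanSpace ℂ (Fin d)) :
    TendstoLocallyUniformlyOn (fun (h : H) (c : ℂ) => DA.ev h (c • w)) (fun c => DA.ev g (c • w))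
      (𝓝 g) (lineDomain w) := by
  rw [Metric.tendstoLocallyUniformlyOn_iff]
  intro ε hε c₀ hc₀
  have hc₀ : ‖c₀ • w‖ < 1 := by simpa [lineDomain] using hc₀
  obtain ⟨ρ, hc₀ρ, hρ⟩ := exists_between hc₀
  set C := √((1 - ρ ^ 2)⁻¹)
  have ht : {c : ℂ | ‖c • w‖ < ρ} ∈ 𝓝[lineDomain w] c₀ :=
    mem_nhdsWithin_of_mem_nhds ((isOpen_lt (by fun_prop) continuous_const).mem_nhds hc₀ρ)
  refine ⟨_, ht, ?_⟩
  filter_upwards [Metric.ball_mem_nhds g (div_pos hε (by positivity : (0:ℝ) < C + 1))]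
    with h hh c hc
  have hc : ‖c • w‖ < ρ := hc
  rw [dist_eq_norm, ← Pi.sub_apply, ← map_sub]
  calc ‖DA.ev (g - h) (c • w)‖ ≤ ‖DA.ker (c • w)‖ * ‖g - h‖ := DA.norm_ev_le _ (hc.trans hρ)
    _ ≤ C * ‖g - h‖ := by gcongr; exact DA.norm_ker_le hc.le hρ
    _ ≤ (C + 1) * ‖g - h‖ := by gcongr; linarith
    _ < (C + 1) * (ε / (C + 1)) := by
      gcongr
      rwa [← dist_eq_norm, dist_comm]
    _ = ε := mul_div_cancel₀ ε (by positivity)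

theorem differentiableOn_ev_smul (g : H) (w : EuclideanSpace ℂ (Fin d)) :
    DifferentiableOn ℂ (fun c : ℂ => DA.ev g (c • w)) (lineDomain w) := by
  set K := span ℂ (DA.ker '' Metric.ball 0 1)
  have hg : g ∈ closure (K : Set H) := by
    rw [← topologicalClosure_coe, DA.topologicalClosure_span_ker_eq_top]
    trivial
  have := mem_closure_iff_nhdsWithin_neBot.1 hg
  have hlim : TendstoLocallyUniformlyOn (fun (h : H) (c : ℂ) => DA.ev h (c • w))
      (fun c => DA.ev g (c • w)) (𝓝[K] g) (lineDomain w) := fun u hu c hc =>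
    (DA.tendstoLocallyUniformlyOn_ev_smul g w u hu c hc).imp fun _ ⟨ht, hev⟩ =>
      ⟨ht, nhdsWithin_le_nhds hev⟩
  exact hlim.differentiableOn
    (eventually_nhdsWithin_of_forall fun h hh => DA.differentiableOn_ev_smul_of_mem_span hh w)
    (isOpen_lineDomain w)

theorem eq_zero_of_forall_norm_lt_ev_eq_zero {ε : ℝ} (hε : 0 < ε) {g : H}
    (h : ∀ w, ‖w‖ < ε → DA.ev g w = 0) : g = 0 := by
  refine DA.sep g fun w hw => ?_
  have hopen : IsOpen {c : ℂ | ‖c • w‖ < ε} := isOpen_lt (by fun_prop) continuous_const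
  have hnear : (fun c : ℂ => DA.ev g (c • w)) =ᶠ[𝓝 0] 0 := by
    filter_upwards [hopen.mem_nhds (by simpa using hε)] with c hc
    exact h _ hc
  have hanalytic := (DA.differentiableOn_ev_smul g w).analyticOnNhd (isOpen_lineDomain w)
  have h1 : (1 : ℂ) ∈ lineDomain w := by simpa [lineDomain] using hw
  simpa using hanalytic.eqOn_zero_of_preconnected_of_eventuallyEq_zero
    (isPreconnected_lineDomain w) (by simp [lineDomain]) hnear h1

def IsCoordMultipliers (Mz : Fin d → H →L[ℂ] H) : Prop :=
  ∀ j (f : H) z, ‖z‖ < 1 → DA.ev (Mz j f) z = z j * DA.ev f z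

def IsMonomials (mon : (Fin d →₀ ℕ) → H) : Prop :=
  ∀ (I : Fin d →₀ ℕ) z, ‖z‖ < 1 → DA.ev (mon I) z = ∏ j, (z j) ^ (I j)

variable {DA}

theorem ev_polynomialMap {mon : (Fin d →₀ ℕ) → H} (hmon : DA.IsMonomials mon)
    (q : MvPolynomial (Fin d) ℂ) {z : EuclideanSpace ℂ (Fin d)} (hz : ‖z‖ < 1) :
    DA.ev (polynomialMap mon q) z = MvPolynomial.eval z.ofLp q := by
  induction q using MvPolynomial.induction_on' with
  | monomial I a =>
    have h : MvPolynomial.monomial I a = a • MvPolynomial.monomial I 1 := by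
      rw [MvPolynomial.smul_monomial, smul_eq_mul, mul_one]
    simp [h, polynomialMap_monomial, hmon I z hz, MvPolynomial.eval_monomial,
      Finsupp.prod_fintype]
  | add p q hp hq => simp [hp, hq]

theorem apply_polynomialMap {Mz : Fin d → H →L[ℂ] H} {mon : (Fin d →₀ ℕ) → H}
    (hMz : DA.IsCoordMultipliers Mz) (hmon : DA.IsMonomials mon) (j : Fin d)
    (q : MvPolynomial (Fin d) ℂ) :
    Mz j (polynomialMap mon q) = polynomialMap mon (MvPolynomial.X j * q) :=
  DA.eq_of_ev_eq fun z hz => by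
    rw [hMz j _ z hz, ev_polynomialMap hmon _ hz, ev_polynomialMap hmon _ hz]
    simp

theorem span_range_le_span_image_sup {Mz : Fin d → H →L[ℂ] H} {mon : (Fin d →₀ ℕ) → H}
    (hMz : DA.IsCoordMultipliers Mz) (hmon : DA.IsMonomials mon) {M : Submodule ℂ H}
    (hMinv : ∀ j, ∀ x ∈ M, Mz j x ∈ M) {A : ℕ}
    (hpoly : ∀ j : Fin d, ∃ f ∈ M, ∃ p : Polynomial ℂ, p ≠ 0 ∧ p.natDegree ≤ A ∧
      ∀ z, ‖z‖ < 1 → DA.ev f z = p.eval (z j)) :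
    span ℂ (range mon) ≤ span ℂ (mon '' {I | ∀ r, I r < A}) ⊔ M := by
  set L := polynomialMap mon
  have hX : ∀ j, ∀ q ∈ M.comap L, MvPolynomial.X j * q ∈ M.comap L := fun j q hq => by
    rw [Submodule.mem_comap, ← apply_polynomialMap hMz hmon]
    exact hMinv j _ hq
  have hA : ∀ j, ∃ p : Polynomial ℂ, p ≠ 0 ∧ p.natDegree ≤ A ∧
      Polynomial.aeval (MvPolynomial.X j) p ∈ M.comap L := by
    intro j
    obtain ⟨f, hf, p, hp, hpA, hpf⟩ := hpoly j
    refine ⟨p, hp, hpA, ?_⟩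
    have hLf : L (Polynomial.aeval (MvPolynomial.X j) p) = f := DA.eq_of_ev_eq fun z hz => by
      rw [ev_polynomialMap hmon _ hz, hpf z hz]
      calc MvPolynomial.eval z.ofLp (Polynomial.aeval (MvPolynomial.X j) p)
          = MvPolynomial.aeval z.ofLp (Polynomial.aeval (MvPolynomial.X j) p) := rfl
        _ = p.eval (z j) := by
          rw [← Polynomial.aeval_algHom_apply, MvPolynomial.aeval_X, Polynomial.coe_aeval_eq_eval]
    simpa [hLf] using hf
  rw [← range_polynomialMap, LinearMap.range_eq_map,
    ← MvPolynomial.restrictSupport_sup_eq_top hX hA, Submodule.map_sup,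
    map_polynomialMap_restrictSupport]
  exact sup_le_sup_left (map_comap_le _ _) _

theorem ev_sum_conj_smul_apply {Mz : Fin d → H →L[ℂ] H} (hMz : DA.IsCoordMultipliers Mz)
    (w : EuclideanSpace ℂ (Fin d)) (f : H) {z : EuclideanSpace ℂ (Fin d)} (hz : ‖z‖ < 1) :
    DA.ev ((∑ j, conj (w j) • Mz j) f) z = inner ℂ w z * DA.ev f z := by
  simp only [sum_apply, smul_apply, map_sum, map_smul, Finset.sum_apply, Pi.smul_apply,
    smul_eq_mul, hMz _ _ z hz, EuclideanSpace.inner_eq_sum_mul_conj, Finset.sum_mul]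
  exact Finset.sum_congr rfl fun j _ => by ring

theorem ker_mem_topologicalClosure_span_range {Mz : Fin d → H →L[ℂ] H}
    {mon : (Fin d →₀ ℕ) → H} (hMz : DA.IsCoordMultipliers Mz) (hmon : DA.IsMonomials mon)
    {w : EuclideanSpace ℂ (Fin d)} (hw : ‖w‖ < 1) (hwMz : ‖w‖ * ∑ j, ‖Mz j‖ < 1) :
    DA.ker w ∈ (span ℂ (range mon)).topologicalClosure := by
  set T : H →L[ℂ] H := ∑ j, conj (w j) • Mz j
  have hT : ‖T‖ < 1 := (norm_sum_conj_smul_le w Mz).trans_lt hwMz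
  have hTV : ∀ x ∈ span ℂ (range mon), T x ∈ span ℂ (range mon) := by
    rw [← range_polynomialMap]
    rintro _ ⟨q, rfl⟩
    simp only [T, sum_apply, smul_apply, apply_polynomialMap hMz hmon]
    exact sum_mem fun j _ => smul_mem _ _ (LinearMap.mem_range_self _ _)
  have hTpow : ∀ n, (T ^ n) (mon 0) ∈ span ℂ (range mon) := by
    intro n
    induction n with
    | zero => exact subset_span ⟨0, rfl⟩
    | succ n ih => rw [pow_succ', mul_apply_eq_comp]; exact hTV _ ih
  have hfix : (1 - T) (DA.ker w) = mon 0 := DA.eq_of_ev_eq fun z hz => by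
    have hwz : 1 - inner ℂ w z ≠ 0 := one_sub_inner_ne_zero hw hz
    rw [sub_apply, one_apply_eq_self, map_sub, Pi.sub_apply, ev_sum_conj_smul_apply hMz w _ hz,
      DA.ev_ker_eq_inv z w hz hw, hmon 0 z hz, ← one_sub_mul, mul_inv_cancel₀ hwz]
    simp
  have hker : DA.ker w = (∑' n, T ^ n) (mon 0) := by
    rw [← hfix, ← mul_apply_eq_comp, geom_series_mul_neg T hT, one_apply_eq_self]
  have hclosed :
      IsClosed {S : H →L[ℂ] H | S (mon 0) ∈ (span ℂ (range mon)).topologicalClosure} :=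
    (span ℂ (range mon)).isClosed_topologicalClosure.preimage
      (ContinuousLinearMap.apply ℂ H (mon 0)).continuous
  rw [hker]
  refine hclosed.mem_of_tendsto (summable_geometric_of_norm_lt_one hT).hasSum.tendsto_sum_nat
    (Eventually.of_forall fun N => ?_)
  simp only [mem_ofPred_eq, sum_apply]
  exact le_topologicalClosure _ (sum_mem fun n _ => hTpow n)

theorem topologicalClosure_span_range_eq_top {Mz : Fin d → H →L[ℂ] H}
    {mon : (Fin d →₀ ℕ) → H} (hMz : DA.IsCoordMultipliers Mz) (hmon : DA.IsMonomials mon) :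
    (span ℂ (range mon)).topologicalClosure = ⊤ := by
  rw [topologicalClosure_eq_top_iff, eq_bot_iff]
  intro g hg
  rw [← orthogonal_closure] at hg
  set C := ∑ j, ‖Mz j‖
  have hC : 0 ≤ C := Finset.sum_nonneg fun j _ => norm_nonneg _
  refine DA.eq_zero_of_forall_norm_lt_ev_eq_zero (ε := (1 + C)⁻¹) (by positivity) fun w hw => ?_
  have hwC : ‖w‖ * (1 + C) < 1 := by
    simpa [inv_mul_cancel₀ (by positivity : (1 + C) ≠ 0)] using
      mul_lt_mul_of_pos_right hw (by positivity : (0 : ℝ) < 1 + C)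
  have hw : ‖w‖ < 1 := by nlinarith [norm_nonneg w]
  rw [DA.repro w hw]
  exact (mem_orthogonal _ g).1 hg _
    (ker_mem_topologicalClosure_span_range hMz hmon hw (by nlinarith [norm_nonneg w]))

end DruryArveson

/-- half of Lemma 2: if a closed invariant subspace `M ⊆ H²_d` contains,
for each `j`, a nonzero one-variable polynomial `p_j(z_j)` of degree at most `A`, then
`M` has finite codimension; indeed `H²_d / M` is spanned by the images of the monomials
`z^I` with all exponents `< A`. -/
theorem stmt10 {d : ℕ} {H : Type}
    [NormedAddCommGroup H] [InnerProductSpace ℂ H] [CompleteSpace H]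
    (DA : DruryArveson d H)
    (Mz : Fin d → H →L[ℂ] H)
    (hMz : ∀ j (f : H) z, ‖z‖ < 1 → DA.ev (Mz j f) z = z j * DA.ev f z)
    (mon : (Fin d →₀ ℕ) → H)
    (hmon : ∀ (I : Fin d →₀ ℕ) z, ‖z‖ < 1 → DA.ev (mon I) z = ∏ j, (z j) ^ (I j))
    (M : Submodule ℂ H) (hMc : IsClosed (M : Set H))
    (hMinv : ∀ j, ∀ x ∈ M, Mz j x ∈ M)
    (A : ℕ)
    (hpoly : ∀ j : Fin d, ∃ f ∈ M, ∃ p : Polynomial ℂ, p ≠ 0 ∧ p.natDegree ≤ A ∧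
      ∀ z, ‖z‖ < 1 → DA.ev f z = p.eval (z j)) :
    FiniteDimensional ℂ (H ⧸ M) ∧
      Submodule.span ℂ
        (M.mkQ '' {x : H | ∃ I : Fin d →₀ ℕ, (∀ r, I r < A) ∧ x = mon I}) = ⊤ := by
  set small := {I : Fin d →₀ ℕ | ∀ r, I r < A}
  have hsmall : small.Finite :=
    (finite_Iic (Finsupp.equivFunOnFinite.symm fun _ => A)).subset fun I hI r => (hI r).le
  have hS : {x : H | ∃ I : Fin d →₀ ℕ, (∀ r, I r < A) ∧ x = mon I} = mon '' small := by
    ext x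
    simp [small, eq_comm]
  have : FiniteDimensional ℂ (span ℂ (mon '' small)) :=
    FiniteDimensional.span_of_finite ℂ (hsmall.image mon)
  have hsup : M ⊔ span ℂ (mon '' small) = ⊤ := by
    refine top_unique ?_
    rw [← DruryArveson.topologicalClosure_span_range_eq_top hMz hmon]
    exact topologicalClosure_minimal _
      ((DruryArveson.span_range_le_span_image_sup hMz hmon hMinv hpoly).trans_eq (sup_comm _ _))
      (M.isClosed_sup_finiteDimensional _ hMc)
  have hspan : span ℂ (M.mkQ '' (mon '' small)) = ⊤ := by
    rw [span_image, map_mkQ_eq_top, hsup]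
  rw [hS]
  exact ⟨⟨hspan ▸ fg_span ((hsmall.image mon).image M.mkQ)⟩, hspan⟩
end

section
/- Let M ⊂ H²(𝔻²) be a closed submodule of the Hardy space of the bidisk (invariant under multiplication by both coordinates z and ω), write M_z = [[R_z, J_z],[0, S_z]] with respect to H² = M ⊕ M^⊥. Then the kernel of J_z* restricted to M ⊖ zM equals M ∩ H_ω, the set of functions in M depending only on ω. -/
open scoped ComplexConjugate

/-- The Hardy space `H²(𝔻²)` of the bidisk, presented as the reproducing kernel Hilbert
space on `𝔻 × 𝔻` with kernel `K((z,ω),(a,b)) = ((1 - z ā)(1 - ω b̄))⁻¹`. -/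
structure HardyBidisk (H : Type)
    [NormedAddCommGroup H] [InnerProductSpace ℂ H] [CompleteSpace H] where
  ev : H →ₗ[ℂ] (ℂ × ℂ → ℂ)
  ker : ℂ × ℂ → H
  sep : ∀ f : H,
    (∀ p : ℂ × ℂ, ‖p.1‖ < 1 → ‖p.2‖ < 1 → ev f p = 0) → f = 0
  repro : ∀ w : ℂ × ℂ, ‖w.1‖ < 1 → ‖w.2‖ < 1 →
    ∀ f : H, ev f w = inner ℂ (ker w) f
  kernel : ∀ z w : ℂ × ℂ, ‖z.1‖ < 1 → ‖z.2‖ < 1 →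
    ‖w.1‖ < 1 → ‖w.2‖ < 1 →
    ev (ker w) z = ((1 - z.1 * conj w.1) * (1 - z.2 * conj w.2))⁻¹

/-
The kernel function `k_{(a,b)}` satisfies `k_{(a,b)} - k_{(0,b)} = ā · z k_{(a,b)}`; pairing with
`f` gives the backward-shift identity `f(a,b) - f(0,b) = a · (M_z* f)(a,b)`. So `M_z* f = 0` forces
`f` to be independent of `z`; conversely, if it is, then `M_z M_z* f = 0`, whence `M_z* f = 0`
since `ker (M_z M_z*) = ker M_z*`. On the other side, `f ⊥ zM` says `M_z* f ∈ M^⊥`, so there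
`P_{M^⊥} M_z* f = M_z* f`, and `ker J_z*` on `M ⊖ zM` is `M ∩ ker M_z* = M ∩ H_ω`.
-/

open ContinuousLinearMap

section Adjoint

variable {𝕜 E F : Type*} [RCLike 𝕜] [NormedAddCommGroup E] [InnerProductSpace 𝕜 E]
  [CompleteSpace E] [NormedAddCommGroup F] [InnerProductSpace 𝕜 F] [CompleteSpace F]

theorem Submodule.mem_orthogonal_map_iff_adjoint_mem_orthogonal (T : E →L[𝕜] F)
    (K : Submodule 𝕜 E) (x : F) :
    x ∈ (K.map (T : E →ₗ[𝕜] F))ᗮ ↔ adjoint T x ∈ Kᗮ := by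
  simp only [Submodule.mem_orthogonal, Submodule.mem_map, forall_exists_index, and_imp,
    forall_apply_eq_imp_iff₂, coe_coe, adjoint_inner_right]

theorem Submodule.orthogonalProjectionOnto_orthogonal_adjoint_eq_zero_iff (T : E →L[𝕜] F)
    (K : Submodule 𝕜 E) [K.HasOrthogonalProjection] {x : F}
    (hx : x ∈ (K.map (T : E →ₗ[𝕜] F))ᗮ) :
    Kᗮ.orthogonalProjectionOnto (adjoint T x) = 0 ↔ adjoint T x = 0 := by
  have hmem := (K.mem_orthogonal_map_iff_adjoint_mem_orthogonal T x).mp hx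
  rw [show Kᗮ.orthogonalProjectionOnto (adjoint T x) = ⟨_, hmem⟩ from
    Kᗮ.orthogonalProjectionOnto_mem_subspace_eq_self ⟨_, hmem⟩, Submodule.mk_eq_zero]

end Adjoint

theorem Complex.one_sub_mul_conj_ne_zero {z w : ℂ} (hz : ‖z‖ < 1) (hw : ‖w‖ < 1) :
    1 - z * conj w ≠ 0 := by
  intro h
  have hnorm : ‖z * conj w‖ = 1 := by rw [← sub_eq_zero.mp h, norm_one]
  rw [norm_mul, Complex.norm_conj] at hnorm
  nlinarith [norm_nonneg z, norm_nonneg w]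

namespace HardyBidisk

variable {H : Type} [NormedAddCommGroup H] [InnerProductSpace ℂ H] [CompleteSpace H]
  (HB : HardyBidisk H) {Mz : H →L[ℂ] H}

def IsMulFstCoord (T : H →L[ℂ] H) : Prop :=
  ∀ (f : H) (p : ℂ × ℂ), ‖p.1‖ < 1 → ‖p.2‖ < 1 → HB.ev (T f) p = p.1 * HB.ev f p

theorem ker_sub_ker_zero (hMz : HB.IsMulFstCoord Mz)
    {a b : ℂ} (ha : ‖a‖ < 1) (hb : ‖b‖ < 1) :
    HB.ker (a, b) - HB.ker (0, b) = conj a • Mz (HB.ker (a, b)) := by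
  have h0 : ‖(0 : ℂ)‖ < 1 := by simp
  rw [← sub_eq_zero]
  refine HB.sep _ fun p hp1 hp2 => ?_
  have h1 := Complex.one_sub_mul_conj_ne_zero hp1 ha
  have h2 := Complex.one_sub_mul_conj_ne_zero hp2 hb
  simp only [map_sub, map_smul, Pi.sub_apply, Pi.smul_apply, smul_eq_mul, hMz _ p hp1 hp2,
    HB.kernel p (a, b) hp1 hp2 ha hb, HB.kernel p (0, b) hp1 hp2 h0 hb, map_zero, mul_zero,
    sub_zero]
  field_simp
  ring

theorem ev_sub_ev_zero_eq_mul_ev_adjoint (hMz : HB.IsMulFstCoord Mz)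
    (f : H) {a b : ℂ} (ha : ‖a‖ < 1) (hb : ‖b‖ < 1) :
    HB.ev f (a, b) - HB.ev f (0, b) = a * HB.ev (adjoint Mz f) (a, b) := by
  have h0 : ‖(0 : ℂ)‖ < 1 := by simp
  rw [HB.repro _ ha hb, HB.repro _ h0 hb, HB.repro _ ha hb, ← inner_sub_left,
    HB.ker_sub_ker_zero hMz ha hb, inner_smul_left, Complex.conj_conj, adjoint_inner_right]

theorem adjoint_apply_eq_zero_iff (hMz : HB.IsMulFstCoord Mz) (f : H) :
    adjoint Mz f = 0 ↔ ∃ g : ℂ → ℂ,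
      ∀ p : ℂ × ℂ, ‖p.1‖ < 1 → ‖p.2‖ < 1 → HB.ev f p = g p.2 := by
  constructor
  · refine fun hf => ⟨fun b => HB.ev f (0, b), fun ⟨a, b⟩ ha hb => ?_⟩
    simpa [hf, sub_eq_zero] using HB.ev_sub_ev_zero_eq_mul_ev_adjoint hMz f ha hb
  · rintro ⟨g, hg⟩
    have h0 : ‖(0 : ℂ)‖ < 1 := by simp
    suffices hf : f ∈ (Mz ∘L adjoint Mz).ker by rwa [ker_self_comp_adjoint] at hf
    refine LinearMap.mem_ker.mpr (HB.sep _ fun ⟨a, b⟩ ha hb => ?_)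
    rw [coe_coe, comp_apply, hMz _ _ ha hb, ← HB.ev_sub_ev_zero_eq_mul_ev_adjoint hMz f ha hb,
      hg (a, b) ha hb, hg (0, b) h0 hb, sub_self]

end HardyBidisk

theorem stmt13_general {H : Type}
    [NormedAddCommGroup H] [InnerProductSpace ℂ H] [CompleteSpace H]
    (HB : HardyBidisk H)
    (Mz : H →L[ℂ] H)
    (hMz : ∀ (f : H) (p : ℂ × ℂ), ‖p.1‖ < 1 → ‖p.2‖ < 1 →
      HB.ev (Mz f) p = p.1 * HB.ev f p)
    (M : Submodule ℂ H) (hMc : IsClosed (M : Set H))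
    (Hw : Submodule ℂ H)
    (hHw : ∀ f : H, f ∈ Hw ↔ ∃ g : ℂ → ℂ,
      ∀ p : ℂ × ℂ, ‖p.1‖ < 1 → ‖p.2‖ < 1 → HB.ev f p = g p.2) :
    letI : CompleteSpace ↥M := hMc.completeSpace_coe
    {x : H | x ∈ M ⊓ ((M.map ((Mz : H →L[ℂ] H) : H →ₗ[ℂ] H)))ᗮ ∧
        Mᗮ.orthogonalProjection (ContinuousLinearMap.adjoint Mz x) = 0}
      = ((M ⊓ Hw : Submodule ℂ H) : Set H) := by
  ext x
  simp only [Set.mem_ofPred_eq, SetLike.mem_coe, Submodule.mem_inf, hHw,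
    ← HB.adjoint_apply_eq_zero_iff hMz]
  constructor
  · rintro ⟨⟨hxM, hx⟩, hproj⟩
    exact ⟨hxM, (M.orthogonalProjectionOnto_orthogonal_adjoint_eq_zero_iff Mz hx).mp hproj⟩
  · rintro ⟨hxM, hx⟩
    refine ⟨⟨hxM, (M.mem_orthogonal_map_iff_adjoint_mem_orthogonal Mz x).mpr ?_⟩, ?_⟩
    · exact hx ▸ Mᗮ.zero_mem
    · rw [hx, map_zero]

/-- for a closed submodule `M ⊆ H²(𝔻²)` (invariant under multiplication by
both coordinates `z`, `ω`), the kernel of `J_z* = P_{M^⊥} M_z*|_M` restricted to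
`M ⊖ zM` equals `M ∩ H_ω`, the functions in `M` depending only on `ω`. -/
theorem stmt13 {H : Type}
    [NormedAddCommGroup H] [InnerProductSpace ℂ H] [CompleteSpace H]
    (HB : HardyBidisk H)
    (Mz Mw : H →L[ℂ] H)
    (hMz : ∀ (f : H) (p : ℂ × ℂ), ‖p.1‖ < 1 → ‖p.2‖ < 1 →
      HB.ev (Mz f) p = p.1 * HB.ev f p)
    (hMw : ∀ (f : H) (p : ℂ × ℂ), ‖p.1‖ < 1 → ‖p.2‖ < 1 →
      HB.ev (Mw f) p = p.2 * HB.ev f p)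
    (M : Submodule ℂ H) (hMc : IsClosed (M : Set H))
    (hMinvz : ∀ x ∈ M, Mz x ∈ M) (hMinvw : ∀ x ∈ M, Mw x ∈ M)
    (Hw : Submodule ℂ H)
    (hHw : ∀ f : H, f ∈ Hw ↔ ∃ g : ℂ → ℂ,
      ∀ p : ℂ × ℂ, ‖p.1‖ < 1 → ‖p.2‖ < 1 → HB.ev f p = g p.2) :
    letI : CompleteSpace ↥M := hMc.completeSpace_coe
    {x : H | x ∈ M ⊓ ((M.map ((Mz : H →L[ℂ] H) : H →ₗ[ℂ] H)))ᗮ ∧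
        Mᗮ.orthogonalProjection (ContinuousLinearMap.adjoint Mz x) = 0}
      = ((M ⊓ Hw : Submodule ℂ H) : Set H) :=
  stmt13_general HB Mz hMz M hMc Hw hHw
end
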